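/- arXiv:1203.4611 — 2 statements merged into one kernel-verified Lean document; each statement's English description precedes it below -/
import Mathlib

section
/- Let H be a graph of order k with at least one edge, let α = α(H), and for α+1 ≤ i ≤ k let ∇_i(H) = min{Δ(F) : F an induced subgraph of H on i vertices} and σ̃_i(H) = 2(k-i) + ∇_i(H) - 1. Then for every α+1 ≤ i ≤ k and n sufficiently large, σ(H,n) ≥ σ̃_i(H)·n - O(1); in particular σ(H,n) ≥ (max_i σ̃_i(H))·n - O(1). -/
open SimpleGraph Finset
open scoped Classical

noncomputable section

def IsGraphic {n : ℕ} (d : Fin n → ℕ) : Prop :=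
  ∃ G : SimpleGraph (Fin n), ∀ v, G.degree v = d v

def Potentially {k n : ℕ} (H : SimpleGraph (Fin k)) (d : Fin n → ℕ) : Prop :=
  ∃ G : SimpleGraph (Fin n), (∀ v, G.degree v = d v) ∧
    ∃ f : H →g G, Function.Injective f

/-- The independence number of a graph on `Fin k`. -/
def indepNum {k : ℕ} (H : SimpleGraph (Fin k)) : ℕ :=
  sSup {m | ∃ s : Finset (Fin k), s.card = m ∧
    ∀ a ∈ s, ∀ b ∈ s, a ≠ b → ¬ H.Adj a b}

/-- `∇_i(H)`: the minimum of the maximum degree over all induced subgraphs of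
`H` on `i` vertices. -/
def nabla {k : ℕ} (H : SimpleGraph (Fin k)) (i : ℕ) : ℕ :=
  sInf {m | ∃ s : Finset (Fin k), s.card = i ∧
    (H.induce (↑s : Set (Fin k))).maxDegree = m}

/-- `σ̃(H) = max{2(k-i)+∇_i(H)-1 : α(H)+1 ≤ i ≤ k}`. -/
def tildeSigma {k : ℕ} (H : SimpleGraph (Fin k)) : ℕ :=
  sSup ((fun i => 2 * (k - i) + nabla H i - 1) ''
    {i | _root_.indepNum H + 1 ≤ i ∧ i ≤ k})

/-- `σ(H,n)`: the minimum even integer `s` such that every `n`-term graphic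
sequence with sum at least `s` is potentially `H`-graphic. -/
def sigmaPot {k : ℕ} (H : SimpleGraph (Fin k)) (n : ℕ) : ℕ :=
  sInf {s | Even s ∧ ∀ d : Fin n → ℕ, Antitone d → IsGraphic d →
    s ≤ ∑ v, d v → Potentially H d}

/-!
Fix `α(H) < i ≤ k` and put `m = k - i`, `D = ∇_i(H)`; then `D ≥ 1`, since every `i`-set of
vertices of `H` spans an edge. Let `d` be the degree sequence of the graph on `n` vertices in
which `m` vertices are universal and the others form consecutive cliques of size `D` (the last
one possibly smaller). Its sum is `(2m + D - 1) n - O(1)`. In any realization of `d` the `m`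
vertices of degree `n - 1` are again universal and all others have degree at most `m + D - 1`.
A copy of `H` has at least `i` vertices outside the universal ones, and among any `i` of them
one has `∇_i(H)` neighbours; its image would have degree at least `m + D`. So `d` is not
potentially `H`-graphic, and `σ(H, n)` exceeds its sum.
-/

lemma card_le_indepNum {k : ℕ} {H : SimpleGraph (Fin k)} {s : Finset (Fin k)}
    (hs : ∀ a ∈ s, ∀ b ∈ s, a ≠ b → ¬ H.Adj a b) : #s ≤ _root_.indepNum H :=
  le_csSup ⟨k, by rintro _ ⟨t, rfl, -⟩; simpa using t.card_le_univ⟩ ⟨s, rfl, hs⟩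

lemma nabla_pos {k i : ℕ} {H : SimpleGraph (Fin k)} (hα : _root_.indepNum H < i) (hik : i ≤ k) :
    0 < nabla H i := by
  obtain ⟨s, -, hs⟩ := exists_subset_card_eq (show i ≤ #(univ : Finset (Fin k)) by simpa)
  refine le_csInf (α := ℕ) ⟨_, s, hs, rfl⟩ ?_
  rintro _ ⟨t, rfl, rfl⟩
  obtain ⟨a, ha, b, hb, -, hab⟩ : ∃ a ∈ t, ∃ b ∈ t, a ≠ b ∧ H.Adj a b := by
    by_contra! h
    exact (card_le_indepNum h).not_gt hα
  exact ((H.induce t).degree_pos_iff_exists_adj ⟨a, ha⟩ |>.2 ⟨⟨b, hb⟩, hab⟩).trans_le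
    ((H.induce t).degree_le_maxDegree _)

lemma degree_induce_eq_card_filter_adj {V : Type*} [Fintype V] (G : SimpleGraph V)
    (s : Finset V) (v : (s : Set V)) : (G.induce s).degree v = #{w ∈ s | G.Adj v w} := by
  rw [← card_neighborFinset_eq_degree, ← card_map (Function.Embedding.subtype _)]
  congr 1
  ext w
  simp [and_comm]

lemma exists_nabla_le_card_filter_adj {k : ℕ} (H : SimpleGraph (Fin k)) {s : Finset (Fin k)}
    (hs : s.Nonempty) : ∃ u ∈ s, nabla H #s ≤ #{w ∈ s | H.Adj u w} := by
  have : Nonempty (s : Set (Fin k)) := hs.to_subtype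
  obtain ⟨u, hu⟩ := (H.induce s).exists_maximal_degree_vertex
  refine ⟨u, u.2, ?_⟩
  rw [← degree_induce_eq_card_filter_adj, ← hu]
  exact Nat.sInf_le ⟨s, rfl, rfl⟩

theorem not_injective_of_degree_lt {k : ℕ} {W : Type*} [Fintype W] {H : SimpleGraph (Fin k)}
    {G : SimpleGraph W} {U : Finset W} (hU : ∀ u ∈ U, G.IsUniversal u) {i : ℕ} (hi : 0 < i)
    (hik : #U + i ≤ k) (hdeg : ∀ w ∉ U, G.degree w < #U + nabla H i) (f : H →g G) :
    ¬ Function.Injective f := by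
  intro hf
  have hlow : i ≤ #{v | f v ∉ U} := by
    have hhigh : #{v | f v ∈ U} ≤ #U :=
      card_le_card_of_injOn f (fun v hv => by simpa using hv) hf.injOn
    have := card_filter_add_card_filter_not (s := univ) (fun v => f v ∈ U)
    simp only [card_univ, Fintype.card_fin] at this
    omega
  obtain ⟨s, hs, rfl⟩ := exists_subset_card_eq hlow
  obtain ⟨u, hu, hnabla⟩ := exists_nabla_le_card_filter_adj H (card_pos.1 hi)
  have hfu : f u ∉ U := (mem_filter.1 (hs hu)).2
  have hnbrs : U ∪ {w ∈ s | H.Adj u w}.image f ⊆ G.neighborFinset (f u) := by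
    intro x hx
    rw [mem_neighborFinset]
    rcases mem_union.1 hx with hx | hx
    · exact (hU x hx <| by rintro rfl; exact hfu hx).symm
    · obtain ⟨w, hw, rfl⟩ := mem_image.1 hx
      exact f.map_adj (mem_filter.1 hw).2
  have hdisj : Disjoint U ({w ∈ s | H.Adj u w}.image f) := by
    refine disjoint_left.2 fun x hxU hx => ?_
    obtain ⟨w, hw, rfl⟩ := mem_image.1 hx
    exact (mem_filter.1 (hs (mem_filter.1 hw).1)).2 hxU
  have := card_le_card hnbrs
  rw [card_union_of_disjoint hdisj, card_image_of_injective _ hf,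
    card_neighborFinset_eq_degree] at this
  have := hdeg (f u) hfu
  omega

/-- Vertices `x < m` are universal; vertex `m + j` lies in the clique with index `j / D`. -/
def blockGraph (n m D : ℕ) : SimpleGraph (Fin n) where
  Adj u v := u ≠ v ∧ ((u : ℕ) < m ∨ (v : ℕ) < m ∨ ((u : ℕ) - m) / D = ((v : ℕ) - m) / D)
  symm := ⟨fun _ _ h => ⟨h.1.symm, by tauto⟩⟩
  loopless := ⟨fun _ h => h.1 rfl⟩

@[simp]
lemma blockGraph_adj {n m D : ℕ} {u v : Fin n} : (blockGraph n m D).Adj u v ↔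
    u ≠ v ∧ ((u : ℕ) < m ∨ (v : ℕ) < m ∨ ((u : ℕ) - m) / D = ((v : ℕ) - m) / D) :=
  Iff.rfl

def blockDegree (n m D x : ℕ) : ℕ :=
  if x < m then n - 1 else m + min D (n - m - (x - m) / D * D) - 1

section blockGraph

variable {n m D : ℕ}

lemma blockGraph_isUniversal {v : Fin n} (hv : (v : ℕ) < m) : (blockGraph n m D).IsUniversal v :=
  fun _ hvw => ⟨hvw, Or.inl hv⟩

lemma blockGraph_degree (hD : 0 < D) (v : Fin n) :
    (blockGraph n m D).degree v = blockDegree n m D v := by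
  by_cases hv : (v : ℕ) < m
  · rw [blockDegree, if_pos hv, (degree_eq_card_sub_one _ v).2 (blockGraph_isUniversal hv),
      Fintype.card_fin]
  set c := ((v : ℕ) - m) / D * D
  have hcv : c ≤ (v : ℕ) - m ∧ (v : ℕ) - m < c + D := by
    have := (Nat.div_eq_iff hD).1 (rfl : ((v : ℕ) - m) / D = _)
    omega
  have hmap : ((blockGraph n m D).neighborFinset v).map Fin.valEmbedding =
      (range m ∪ Ico (m + c) (min (m + c + D) n)).erase v := by
    ext x
    simp only [mem_map, mem_neighborFinset, blockGraph_adj, Fin.valEmbedding_apply, mem_erase,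
      mem_union, mem_range, mem_Ico, lt_min_iff]
    constructor
    · rintro ⟨u, ⟨huv, hu⟩, rfl⟩
      have := Nat.div_eq_iff hD (x := (u : ℕ) - m) (y := ((v : ℕ) - m) / D)
      have := Fin.val_ne_of_ne huv
      omega
    · intro hx
      have := Nat.div_eq_iff hD (x := x - m) (y := ((v : ℕ) - m) / D)
      refine ⟨⟨x, by omega⟩, ⟨fun h => hx.1 (congrArg Fin.val h).symm, ?_⟩, rfl⟩
      rcases hx.2 with hxm | hxc
      · exact Or.inr (Or.inl hxm)
      · exact Or.inr (Or.inr (this.2 (by omega)).symm)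
  rw [← card_neighborFinset_eq_degree, ← card_map, hmap, card_erase_of_mem, card_union_of_disjoint,
    card_range, Nat.card_Ico, blockDegree, if_neg hv]
  · omega
  · exact disjoint_left.2 fun x hx hx' => by simp only [mem_range, mem_Ico] at hx hx'; omega
  · simp only [mem_union, mem_Ico, lt_min_iff]
    omega

lemma blockDegree_le {x : ℕ} (hx : m ≤ x) : blockDegree n m D x ≤ m + D - 1 := by
  rw [blockDegree, if_neg hx.not_gt]
  omega

lemma blockDegree_antitone : Antitone fun v : Fin n => blockDegree n m D v := by
  intro v w hvw
  have hvw : (v : ℕ) ≤ w := hvw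
  have hblock : ((v : ℕ) - m) / D * D ≤ ((w : ℕ) - m) / D * D :=
    Nat.mul_le_mul_right D (Nat.div_le_div_right (by omega))
  have hw : ((w : ℕ) - m) / D * D ≤ (w : ℕ) - m := Nat.div_mul_le_self _ _
  simp only [blockDegree]
  split_ifs <;> omega

lemma le_sum_blockDegree (hD : 0 < D) (hn : m + D ≤ n) :
    (2 * m + D - 1) * n ≤ ∑ v : Fin n, blockDegree n m D v + (m + D) ^ 2 := by
  have hfull : ∀ x ∈ Ico m (n + 1 - D), m + D - 1 ≤ blockDegree n m D x := by
    intro x hx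
    rw [mem_Ico] at hx
    have : (x - m) / D * D ≤ x - m := Nat.div_mul_le_self _ _
    rw [blockDegree, if_neg (by omega)]
    omega
  have hhigh : ∑ x ∈ range m, blockDegree n m D x = m * (n - 1) := by
    rw [sum_congr rfl fun x hx => by rw [blockDegree, if_pos (mem_range.1 hx)], sum_const,
      card_range, smul_eq_mul]
  have hlow : (n + 1 - D - m) * (m + D - 1) ≤ ∑ x ∈ Ico m n, blockDegree n m D x :=
    calc (n + 1 - D - m) * (m + D - 1) ≤ ∑ x ∈ Ico m (n + 1 - D), blockDegree n m D x := by
          simpa using card_nsmul_le_sum _ _ _ hfull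
      _ ≤ ∑ x ∈ Ico m n, blockDegree n m D x :=
          sum_le_sum_of_subset (Ico_subset_Ico_right (by omega))
  rw [Fin.sum_univ_eq_sum_range (blockDegree n m D ·),
    ← sum_range_add_sum_Ico _ (by omega : m ≤ n), hhigh]
  zify [show 1 ≤ n by omega, show 1 ≤ 2 * m + D by omega, show 1 ≤ m + D by omega,
    show D ≤ n + 1 by omega, show m ≤ n + 1 - D by omega] at hlow ⊢
  nlinarith

end blockGraph

lemma IsGraphic.sum_le {n : ℕ} {d : Fin n → ℕ} (hd : IsGraphic d) : ∑ v, d v ≤ n * n := by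
  obtain ⟨G, hG⟩ := hd
  calc ∑ v, d v ≤ ∑ _v : Fin n, n :=
        sum_le_sum fun v _ => by simpa [← hG v] using (G.degree_lt_card_verts v).le
    _ = n * n := by simp

lemma potentially_of_sigmaPot_le {k n : ℕ} {H : SimpleGraph (Fin k)} {d : Fin n → ℕ}
    (hd : Antitone d) (hg : IsGraphic d) (h : sigmaPot H n ≤ ∑ v, d v) : Potentially H d := by
  have hne : {s | Even s ∧ ∀ d : Fin n → ℕ, Antitone d → IsGraphic d →
      s ≤ ∑ v, d v → Potentially H d}.Nonempty :=
    ⟨2 * (n * n + 1), even_two_mul _, fun d _ hg h => absurd hg.sum_le (by omega)⟩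
  exact (Nat.sInf_mem hne).2 d hd hg h

theorem le_sigmaPot_add {k i : ℕ} {H : SimpleGraph (Fin k)} (hα : _root_.indepNum H < i)
    (hik : i ≤ k) {n : ℕ} (hn : k - i + nabla H i ≤ n) :
    (2 * (k - i) + nabla H i - 1) * n ≤ sigmaPot H n + (k - i + nabla H i) ^ 2 := by
  set m := k - i
  set D := nabla H i
  have hD : 0 < D := nabla_pos hα hik
  have hnot : ¬ Potentially H fun v : Fin n => blockDegree n m D v := by
    rintro ⟨G, hG, f, hf⟩
    refine not_injective_of_degree_lt (U := {v : Fin n | (v : ℕ) < m}) (i := i) ?_ (by omega) ?_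
      ?_ f hf
    · intro u hu
      rw [← degree_eq_card_sub_one, hG, Fintype.card_fin]
      exact if_pos (mem_filter.1 hu).2
    · rw [Fin.card_filter_val_lt, min_eq_right (by omega)]
      omega
    · intro w hw
      have := blockDegree_le (n := n) (D := D) (not_lt.1 fun h => hw (by simpa using h))
      rw [hG, Fin.card_filter_val_lt, min_eq_right (by omega)]
      dsimp only
      omega
  have hlt : ∑ v : Fin n, blockDegree n m D v < sigmaPot H n := lt_of_not_ge fun h =>
    hnot (potentially_of_sigmaPot_le blockDegree_antitone ⟨_, blockGraph_degree hD⟩ h)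
  have := le_sum_blockDegree hD hn
  omega

lemma tildeSigma_eq_zero_or_exists_eq {k : ℕ} (H : SimpleGraph (Fin k)) :
    tildeSigma H = 0 ∨
      ∃ i, _root_.indepNum H < i ∧ i ≤ k ∧ tildeSigma H = 2 * (k - i) + nabla H i - 1 := by
  rw [tildeSigma]
  set S := (fun i => 2 * (k - i) + nabla H i - 1) '' {i | _root_.indepNum H + 1 ≤ i ∧ i ≤ k}
  rcases S.eq_empty_or_nonempty with h | h
  · left
    rw [h, csSup_empty, bot_eq_zero]
  · right
    have hfin : S.Finite := ((Set.finite_Iic k).subset fun _ hi => hi.2).image _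
    obtain ⟨i, ⟨hα, hik⟩, hi⟩ := Nat.sSup_mem h hfin.bddAbove
    exact ⟨i, hα, hik, hi.symm⟩

theorem stmt14_general (k : ℕ) (H : SimpleGraph (Fin k)) :
    (∀ i : ℕ, _root_.indepNum H + 1 ≤ i → i ≤ k →
      ∃ C N : ℕ, ∀ n, N ≤ n →
        (2 * (k - i) + nabla H i - 1) * n ≤ sigmaPot H n + C) ∧
    (∃ C N : ℕ, ∀ n, N ≤ n → tildeSigma H * n ≤ sigmaPot H n + C) := by
  have hbound : ∀ i : ℕ, _root_.indepNum H + 1 ≤ i → i ≤ k →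
      ∃ C N : ℕ, ∀ n, N ≤ n → (2 * (k - i) + nabla H i - 1) * n ≤ sigmaPot H n + C :=
    fun _ hα hik => ⟨_, _, fun _ hn => le_sigmaPot_add hα hik hn⟩
  refine ⟨hbound, ?_⟩
  rcases tildeSigma_eq_zero_or_exists_eq H with h | ⟨i, hα, hik, h⟩
  · exact ⟨0, 0, fun n _ => by simp [h]⟩
  · rw [h]
    exact hbound i hα hik

/-- for a graph `H` of order `k` with at least one edge, for each
`α(H)+1 ≤ i ≤ k` one has `σ(H,n) ≥ σ̃_i(H)·n - O(1)`, and in particular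
`σ(H,n) ≥ (max_i σ̃_i(H))·n - O(1)`. -/
theorem stmt14 (k : ℕ) (H : SimpleGraph (Fin k)) (hne : H ≠ ⊥) :
    (∀ i : ℕ, _root_.indepNum H + 1 ≤ i → i ≤ k →
      ∃ C N : ℕ, ∀ n, N ≤ n →
        (2 * (k - i) + nabla H i - 1) * n ≤ sigmaPot H n + C) ∧
    (∃ C N : ℕ, ∀ n, N ≤ n → tildeSigma H * n ≤ sigmaPot H n + C) :=
  stmt14_general k H
end
end

section
/- Let G be a graph, S ⊆ V(G) with |S| = k, and let α, ℓ be positive integers with ℓ = 2·C(k-α,2) + α. Suppose there exist an independent set {w_1,...,w_ℓ} ⊆ V(G)∖S and a (k-α)-element subset Ŝ of S such that each w_i is adjacent to every vertex of Ŝ. Then some sequence of 2-switches transforms G into a graph with the same degree sequence that contains K_{k-α} ∨ \overline{K_α} as a subgraph. -/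
open SimpleGraph
open scoped Classical

/-- The split graph `K_r ∨ K̄_s`: the join of a complete graph on `r` vertices
with an edgeless graph on `s` vertices. -/
def splitGraph (r s : ℕ) : SimpleGraph (Fin (r + s)) :=
  SimpleGraph.fromRel (fun a _ => (a : ℕ) < r)

/-- `G'` is obtained from `G` by a single 2-switch: edges `ua, vb` are replaced
by edges `uv, ab` (where `uv, ab` were nonedges and `u,v,a,b` are distinct). -/
def TwoSwitch {V : Type*} (G G' : SimpleGraph V) : Prop :=
  ∃ u v a b : V, u ≠ v ∧ a ≠ b ∧ u ≠ a ∧ u ≠ b ∧ v ≠ a ∧ v ≠ b ∧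
    G.Adj u a ∧ G.Adj v b ∧ ¬ G.Adj u v ∧ ¬ G.Adj a b ∧
    G' = (G.deleteEdges {s(u, a), s(v, b)}) ⊔
      SimpleGraph.fromEdgeSet {s(u, v), s(a, b)}

/-!
If two vertices `x, y` of `T` are non-adjacent, pick two vertices `w₀, w₁` of the independent
set `W = {w_1, …, w_ℓ}`; since `w₀x, w₁y` are edges and `w₀w₁, xy` are not, the 2-switch to
`w₀w₁, xy` is available. It makes `xy` an edge, creates no edge inside `W \ {w₀, w₁}` and keeps
all edges between `W \ {w₀, w₁}` and `T`. Repeating this for each of the at most `C(|T|, 2)`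
missing edges of `T` consumes at most `2 C(|T|, 2)` vertices of `W`, so at least `α` of them
remain, and together with the now complete `T` they span `K_{|T|} ∨ K̄_α`. A 2-switch preserves
all degrees.
-/

open Finset Function

namespace SimpleGraph

variable {V : Type*} (G : SimpleGraph V) (u v a b : V)

def twoSwitch : SimpleGraph V :=
  G.deleteEdges {s(u, a), s(v, b)} ⊔ fromEdgeSet {s(u, v), s(a, b)}

lemma twoSwitch_adj {x y : V} :
    (G.twoSwitch u v a b).Adj x y ↔
      G.Adj x y ∧ s(x, y) ≠ s(u, a) ∧ s(x, y) ≠ s(v, b) ∨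
        (s(x, y) = s(u, v) ∨ s(x, y) = s(a, b)) ∧ x ≠ y := by
  simp [twoSwitch, and_assoc]

lemma twoSwitch_comm : G.twoSwitch u v a b = G.twoSwitch v u b a := by
  rw [twoSwitch, twoSwitch, Set.pair_comm, Sym2.eq_swap (a := u) (b := v),
    Sym2.eq_swap (a := a) (b := b)]

lemma twoSwitch_flip : G.twoSwitch u v a b = G.twoSwitch a b u v := by
  rw [twoSwitch, twoSwitch, Set.pair_comm (s(u, v)), Sym2.eq_swap (a := u) (b := a),
    Sym2.eq_swap (a := v) (b := b)]

section Degree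

variable [Fintype V]

lemma neighborFinset_twoSwitch_left (huv : u ≠ v) (hua : u ≠ a) (hub : u ≠ b) :
    (G.twoSwitch u v a b).neighborFinset u = insert v ((G.neighborFinset u).erase a) := by
  ext x
  simp only [mem_neighborFinset, twoSwitch_adj, mem_insert, mem_erase, Sym2.eq_iff]
  grind

lemma neighborFinset_twoSwitch_of_ne {z : V} (hu : z ≠ u) (hv : z ≠ v) (ha : z ≠ a)
    (hb : z ≠ b) : (G.twoSwitch u v a b).neighborFinset z = G.neighborFinset z := by
  ext x
  simp only [mem_neighborFinset, twoSwitch_adj, Sym2.eq_iff]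
  grind

lemma degree_twoSwitch_left (huv : u ≠ v) (hua : u ≠ a) (hub : u ≠ b) (hGua : G.Adj u a)
    (hGuv : ¬G.Adj u v) : (G.twoSwitch u v a b).degree u = G.degree u := by
  rw [← card_neighborFinset_eq_degree, ← card_neighborFinset_eq_degree,
    neighborFinset_twoSwitch_left G u v a b huv hua hub,
    card_insert_of_notMem (by simp [hGuv]), card_erase_add_one (by simpa)]

lemma degree_twoSwitch (huv : u ≠ v) (hab : a ≠ b) (hua : u ≠ a) (hub : u ≠ b) (hva : v ≠ a)
    (hvb : v ≠ b) (hGua : G.Adj u a) (hGvb : G.Adj v b) (hGuv : ¬G.Adj u v)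
    (hGab : ¬G.Adj a b) (z : V) : (G.twoSwitch u v a b).degree z = G.degree z := by
  by_cases hzu : z = u
  · subst hzu
    exact G.degree_twoSwitch_left z v a b huv hua hub hGua hGuv
  by_cases hzv : z = v
  · subst hzv
    rw [twoSwitch_comm]
    exact G.degree_twoSwitch_left z u b a huv.symm hvb hva hGvb fun h => hGuv h.symm
  by_cases hza : z = a
  · subst hza
    rw [twoSwitch_flip]
    exact G.degree_twoSwitch_left z b u v hab hua.symm hva.symm hGua.symm hGab
  by_cases hzb : z = b
  · subst hzb
    rw [twoSwitch_flip, twoSwitch_comm]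
    exact G.degree_twoSwitch_left z a v u hab.symm hvb.symm hub.symm hGvb.symm
      fun h => hGab h.symm
  rw [← card_neighborFinset_eq_degree, ← card_neighborFinset_eq_degree,
    neighborFinset_twoSwitch_of_ne G u v a b hzu hzv hza hzb]

end Degree

variable {G u v a b}

lemma twoSwitch_adj_of_adj {x y : V} (h : G.Adj x y) (hua : s(x, y) ≠ s(u, a))
    (hvb : s(x, y) ≠ s(v, b)) : (G.twoSwitch u v a b).Adj x y :=
  (G.twoSwitch_adj u v a b).2 (Or.inl ⟨h, hua, hvb⟩)

lemma adj_of_twoSwitch_adj {x y : V} (h : (G.twoSwitch u v a b).Adj x y)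
    (huv : s(x, y) ≠ s(u, v)) (hab : s(x, y) ≠ s(a, b)) : G.Adj x y := by
  rcases (G.twoSwitch_adj u v a b).1 h with ⟨h, -⟩ | ⟨h | h, -⟩
  exacts [h, absurd h huv, absurd h hab]

lemma twoSwitch_adj_right (hab : a ≠ b) : (G.twoSwitch u v a b).Adj a b :=
  (G.twoSwitch_adj u v a b).2 (Or.inr ⟨Or.inr rfl, hab⟩)

lemma IsIndepSet.twoSwitch {s : Set V} (hs : G.IsIndepSet s) (hu : u ∉ s) (ha : a ∉ s) :
    (G.twoSwitch u v a b).IsIndepSet s := by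
  intro x hx y hy hxy hadj
  refine hs hx hy hxy (adj_of_twoSwitch_adj hadj ?_ ?_) <;>
  · rw [Ne, Sym2.eq_iff]
    grind

lemma IsCompleteBetween.twoSwitch {s t : Set V} (h : G.IsCompleteBetween s t) (hu : u ∉ s)
    (hv : v ∉ s) (ha : a ∉ s) (hb : b ∉ s) : (G.twoSwitch u v a b).IsCompleteBetween s t := by
  intro x hx y hy
  refine twoSwitch_adj_of_adj (h hx hy) ?_ ?_ <;>
  · rw [Ne, Sym2.eq_iff]
    grind

/- `Gᶜ.interedges T T` consists of the ordered pairs of distinct non-adjacent vertices of `T`: it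
counts each missing edge of `T` twice, once for each of the two vertices of `W` its switch uses. -/

lemma card_compl_interedges_self_le (s : Finset V) :
    #(Gᶜ.interedges s s) ≤ 2 * (#s).choose 2 := by
  have hsub : Gᶜ.interedges s s ⊆ s.offDiag := fun p hp => by
    obtain ⟨h₁, h₂, hadj⟩ := (Gᶜ.mem_interedges_iff).1 hp
    exact mem_offDiag.2 ⟨h₁, h₂, hadj.ne⟩
  calc #(Gᶜ.interedges s s) ≤ #s.offDiag := card_le_card hsub
    _ = #s * (#s - 1) := by rw [offDiag_card, Nat.mul_sub_one]
    _ = 2 * (#s).choose 2 := by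
      rw [Nat.choose_two_right, Nat.mul_div_cancel' (Nat.even_mul_pred_self _).two_dvd]

lemma card_compl_interedges_twoSwitch_add_two_le {T : Finset V} (ha : a ∈ T) (hb : b ∈ T)
    (hab : Gᶜ.Adj a b) (hu : u ∉ T) (hv : v ∉ T) :
    #((G.twoSwitch u v a b)ᶜ.interedges T T) + 2 ≤ #(Gᶜ.interedges T T) := by
  have hpair : {(a, b), (b, a)} ⊆ Gᶜ.interedges T T := by
    simp [insert_subset_iff, mk_mem_interedges_iff, ha, hb, hab, hab.symm]
  have hsub : (G.twoSwitch u v a b)ᶜ.interedges T T ⊆ Gᶜ.interedges T T \ {(a, b), (b, a)} := by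
    rintro ⟨x, y⟩ hxy
    simp only [mem_sdiff, mk_mem_interedges_iff, compl_adj, mem_insert, mem_singleton,
      Prod.mk.injEq] at hxy ⊢
    obtain ⟨hx, hy, hne, hnadj⟩ := hxy
    refine ⟨⟨hx, hy, hne, fun h => hnadj (twoSwitch_adj_of_adj h ?_ ?_)⟩, ?_⟩
    · rw [Ne, Sym2.eq_iff]; grind
    · rw [Ne, Sym2.eq_iff]; grind
    · rintro (⟨rfl, rfl⟩ | ⟨rfl, rfl⟩)
      exacts [hnadj (twoSwitch_adj_right hne), hnadj (twoSwitch_adj_right hne.symm).symm]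
  have hcard : #({(a, b), (b, a)} : Finset (V × V)) = 2 := card_pair (by simp [hab.ne])
  have := card_le_card hsub
  have := card_le_card hpair
  rw [card_sdiff_of_subset hpair] at *
  omega

end SimpleGraph

lemma TwoSwitch.degree_eq {V : Type*} [Fintype V] {G G' : SimpleGraph V} (h : TwoSwitch G G')
    (z : V) : G'.degree z = G.degree z := by
  obtain ⟨u, v, a, b, huv, hab, hua, hub, hva, hvb, hGua, hGvb, hGuv, hGab, rfl⟩ := h
  exact G.degree_twoSwitch u v a b huv hab hua hub hva hvb hGua hGvb hGuv hGab z

lemma degree_eq_of_reflTransGen_twoSwitch {V : Type*} [Fintype V] {G G' : SimpleGraph V}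
    (h : Relation.ReflTransGen TwoSwitch G G') (z : V) : G'.degree z = G.degree z := by
  induction h with
  | refl => rfl
  | tail _ hstep ih => rw [hstep.degree_eq, ih]

namespace SimpleGraph

variable {V : Type*} {G : SimpleGraph V}

lemma exists_reflTransGen_twoSwitch_isClique {T W : Finset V} (hW : G.IsIndepSet W)
    (hWT : G.IsCompleteBetween W T) (hcard : #(Gᶜ.interedges T T) ≤ #W) :
    ∃ G', Relation.ReflTransGen TwoSwitch G G' ∧ G'.IsClique T ∧
      ∃ W' : Finset V, #W ≤ #W' + #(Gᶜ.interedges T T) ∧ G'.IsCompleteBetween W' T := by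
  induction hN : #(Gᶜ.interedges T T) using Nat.strong_induction_on generalizing G W with
  | _ N ih =>
  by_cases hT : G.IsClique T
  · exact ⟨G, .refl, hT, W, by omega, hWT⟩
  obtain ⟨x, hx, y, hy, hxy, hGxy⟩ : ∃ x ∈ T, ∃ y ∈ T, x ≠ y ∧ ¬G.Adj x y := by
    simpa [IsClique, Set.Pairwise] using hT
  have hxy' : Gᶜ.Adj x y := (compl_adj G x y).2 ⟨hxy, hGxy⟩
  have hTW : ∀ z ∈ T, z ∉ W := fun z hz hzW => (hWT hzW hz).ne rfl
  obtain ⟨w₀, hw₀, w₁, hw₁, hw⟩ : ∃ w₀ ∈ W, ∃ w₁ ∈ W, w₀ ≠ w₁ := by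
    refine one_lt_card.1 (lt_of_lt_of_le ?_ hcard)
    refine one_lt_card.2 ⟨(x, y), ?_, (y, x), ?_, by simp [hxy]⟩ <;>
      simp [mk_mem_interedges_iff, hx, hy, hxy', hxy'.symm]
  set W₁ := W \ {w₀, w₁}
  have hW₁ : (W₁ : Set V) ⊆ W := by simp [W₁]
  have hwW₁ : w₀ ∉ W₁ ∧ w₁ ∉ W₁ := by simp [W₁]
  have hxyW₁ : x ∉ W₁ ∧ y ∉ W₁ := by simp [W₁, hTW x hx, hTW y hy]
  have hW₁card : #W ≤ #W₁ + 2 :=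
    card_le_card_sdiff_add_card.trans (add_le_add_right card_le_two _)
  have hstep : TwoSwitch G (G.twoSwitch w₀ w₁ x y) :=
    ⟨w₀, w₁, x, y, hw, hxy, (hWT hw₀ hx).ne, (hWT hw₀ hy).ne, (hWT hw₁ hx).ne,
      (hWT hw₁ hy).ne, hWT hw₀ hx, hWT hw₁ hy, hW hw₀ hw₁ hw, hGxy, rfl⟩
  have hN₁ : #((G.twoSwitch w₀ w₁ x y)ᶜ.interedges T T) + 2 ≤ N :=
    hN ▸ card_compl_interedges_twoSwitch_add_two_le hx hy hxy' (hTW w₀ · hw₀) (hTW w₁ · hw₁)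
  obtain ⟨G', hG', hclique, W', hW', hW'T⟩ := ih _ (by omega)
    (IsIndepSet.twoSwitch (hW.mono hW₁) hwW₁.1 hxyW₁.1)
    (IsCompleteBetween.twoSwitch (fun _ hz _ hz' => hWT (hW₁ hz) hz') hwW₁.1 hwW₁.2 hxyW₁.1
      hxyW₁.2)
    (by omega) rfl
  exact ⟨G', .head hstep hG', hclique, W', by omega, hW'T⟩

lemma exists_injective_splitGraph_hom {r s : ℕ} (c : Fin r → V) (d : Fin s → V)
    (hc : Injective c) (hd : Injective d) (hcc : Pairwise fun i j => G.Adj (c i) (c j))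
    (hcd : ∀ i j, G.Adj (c i) (d j)) : ∃ f : splitGraph r s →g G, Injective f := by
  refine ⟨⟨Fin.append c d, fun {i j} hij => ?_⟩,
    Fin.append_injective_iff.2 ⟨hc, hd, fun i j => (hcd i j).ne⟩⟩
  obtain ⟨hne, hlt⟩ : i ≠ j ∧ ((i : ℕ) < r ∨ (j : ℕ) < r) := by
    simpa [splitGraph] using hij
  induction i using Fin.addCases <;> induction j using Fin.addCases <;>
    simp_all [Fin.append_left, Fin.append_right, (hcd _ _).symm]
  exact hcc fun h => hne (h ▸ rfl)

lemma IsClique.exists_injective_splitGraph_hom {T W : Finset V} {α : ℕ} (hT : G.IsClique T)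
    (hWT : G.IsCompleteBetween W T) (hα : α ≤ #W) :
    ∃ f : splitGraph #T α →g G, Injective f := by
  refine SimpleGraph.exists_injective_splitGraph_hom (fun i => (T.equivFin.symm i : V))
    (fun i => (W.equivFin.symm (Fin.castLE hα i) : V)) ?_ ?_ ?_ ?_
  · exact Subtype.val_injective.comp T.equivFin.symm.injective
  · exact Subtype.val_injective.comp (W.equivFin.symm.injective.comp (Fin.castLE_injective hα))
  · exact fun i j hij => hT (T.equivFin.symm i).2 (T.equivFin.symm j).2
      (Subtype.val_injective.ne (T.equivFin.symm.injective.ne hij))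
  · exact fun i j => (hWT (W.equivFin.symm _).2 (T.equivFin.symm i).2).symm

end SimpleGraph

theorem stmt17_general {V : Type*} [Fintype V] (G : SimpleGraph V)
    (k α ℓ : ℕ) (hℓ : ℓ = 2 * Nat.choose (k - α) 2 + α)
    (w : Fin ℓ → V) (hwinj : Function.Injective w)
    (hwindep : ∀ j j', j ≠ j' → ¬ G.Adj (w j) (w j'))
    (T : Finset V) (hT : T.card = k - α)
    (hadj : ∀ j, ∀ x ∈ T, G.Adj (w j) x) :
    ∃ G' : SimpleGraph V, Relation.ReflTransGen TwoSwitch G G' ∧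
      (∀ v, G'.degree v = G.degree v) ∧
      ∃ f : splitGraph (k - α) α →g G', Function.Injective f := by
  rw [← hT] at hℓ ⊢
  set W := univ.image w
  have hW : G.IsIndepSet W := by
    simp only [W, coe_image, coe_univ, Set.image_univ]
    rintro _ ⟨j, rfl⟩ _ ⟨j', rfl⟩ h
    exact hwindep j j' (ne_of_apply_ne w h)
  have hWT : G.IsCompleteBetween W T := by
    simp only [W, coe_image, coe_univ, Set.image_univ]
    rintro _ ⟨j, rfl⟩ x hx
    exact hadj j x hx
  have hWcard : #W = ℓ := by simp [W, card_image_of_injective _ hwinj]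
  have hbound := G.card_compl_interedges_self_le T
  obtain ⟨G', hG', hclique, W', hW', hW'T⟩ :=
    exists_reflTransGen_twoSwitch_isClique hW hWT (by omega)
  obtain ⟨f, hf⟩ := hclique.exists_injective_splitGraph_hom hW'T (α := α) (by omega)
  exact ⟨G', hG', degree_eq_of_reflTransGen_twoSwitch hG', f, hf⟩

/-- let `S` be a `k`-set of vertices of `G`, `α, ℓ` positive with
`ℓ = 2·C(k-α,2) + α`, and suppose there are an independent set `w_1,…,w_ℓ`
outside `S` and a `(k-α)`-subset `T` of `S` such that every `w_j` is adjacent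
to every vertex of `T`.  Then some sequence of 2-switches transforms `G` into a
graph with the same degree sequence containing `K_{k-α} ∨ K̄_α` as a
subgraph. -/
theorem stmt17 {V : Type*} [Fintype V] (G : SimpleGraph V)
    (S : Finset V) (k α ℓ : ℕ) (hS : S.card = k)
    (hα : 0 < α) (hℓpos : 0 < ℓ) (hℓ : ℓ = 2 * Nat.choose (k - α) 2 + α)
    (w : Fin ℓ → V) (hwinj : Function.Injective w)
    (hwS : ∀ j, w j ∉ S)
    (hwindep : ∀ j j', j ≠ j' → ¬ G.Adj (w j) (w j'))
    (T : Finset V) (hTS : T ⊆ S) (hT : T.card = k - α)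
    (hadj : ∀ j, ∀ x ∈ T, G.Adj (w j) x) :
    ∃ G' : SimpleGraph V, Relation.ReflTransGen TwoSwitch G G' ∧
      (∀ v, G'.degree v = G.degree v) ∧
      ∃ f : splitGraph (k - α) α →g G', Function.Injective f :=
  stmt17_general G k α ℓ hℓ w hwinj hwindep T hT hadj
end
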